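/- Let A be a set (alphabet), let S₁, …, S_m be finite semigroups each having trivial local monoids, let hᵢ be a semigroup morphism from the free semigroup on A to Sᵢ for 1 ≤ i ≤ m, and let N = |S₁| + ⋯ + |S_m|. Then for every word w over A of length ℓ > 2N + 2, the word v consisting of the first N+1 and the last N+1 letters of w satisfies hᵢ(v) = hᵢ(w) for all i ∈ {1,…,m}. In particular, every non-empty intersection of languages recognized by the morphisms h₁,…,h_m contains a word of length at most 2N + 2. -/

import Mathlib

/-!
In a finite semigroup `T`, a word longer than `|T|` has two distinct prefixes with the same
image in `T¹`, so it factors as `x y z` with `y` non-empty and `[x][y] = [x]`. Then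
`[x] = [x][y]ᵏ` for an idempotent power `e = [y]ᵏ ∈ T`, and the word evaluates to `α e γ`.
If `T ∈ LI`, any two idempotents satisfy `e s f = e f` for all `s ∈ T¹`, because
`e f = e (s f e) e f = e s (f e f) = e s f`. Hence, once the first and the last `N + 1 > |T|`
letters of a word are fixed, its image in `T¹` does not depend on the middle part.
-/

/-- The element of the free semigroup on `A` corresponding to a (non-empty) word,
viewed inside the monoid `WithOne (FreeSemigroup A)`. -/
def wordProd {A : Type*} (l : List A) : WithOne (FreeSemigroup A) :=
  (l.map fun a => ((FreeSemigroup.of a : FreeSemigroup A) : WithOne (FreeSemigroup A))).prod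

section Monoid

variable {M : Type*} [Monoid M]

theorem mul_pow_eq_self_of_mul_eq_self {p u : M} (h : p * u = p) (k : ℕ) : p * u ^ k = p := by
  induction k with
  | zero => rw [pow_zero, mul_one]
  | succ k ih => rw [pow_succ, ← mul_assoc, ih, h]

theorem exists_isIdempotentElem_pow [Finite M] (u : M) :
    ∃ k, 0 < k ∧ IsIdempotentElem (u ^ k) := by
  obtain ⟨a, b, hab, heq⟩ := Finite.exists_ne_map_eq_of_infinite fun n : ℕ => u ^ (n + 1)
  wlog hlt : a < b generalizing a b
  · exact this b a hab.symm heq.symm (hab.lt_or_gt.resolve_left hlt)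
  set s := a + 1
  set r := b - a
  have hperiod : u ^ s * u ^ r = u ^ s := by
    rw [← pow_add, show s + r = b + 1 by omega]
    exact heq.symm
  have hsplit : u ^ (r * s) = u ^ (r * s - s) * u ^ s := by
    rw [← pow_add, Nat.sub_add_cancel (Nat.le_mul_of_pos_left s (by omega))]
  refine ⟨r * s, Nat.mul_pos (by omega) (by omega), ?_⟩
  calc u ^ (r * s) * u ^ (r * s) = u ^ (r * s - s) * (u ^ s * (u ^ r) ^ s) := by
        rw [← pow_mul, ← mul_assoc, ← hsplit]
    _ = u ^ (r * s) := by rw [mul_pow_eq_self_of_mul_eq_self hperiod, ← hsplit]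

theorem List.exists_eq_append_append_prod_mul_eq {α : Type*} [Fintype M] (f : α → M)
    (l : List α) (hl : Fintype.card M ≤ l.length) :
    ∃ x y z : List α, y ≠ [] ∧ l = x ++ y ++ z ∧
      (x.map f).prod * (y.map f).prod = (x.map f).prod := by
  obtain ⟨i, j, hij, heq⟩ := Fintype.exists_ne_map_eq_of_card_lt
    (fun j : Fin (Fintype.card M + 1) => ((l.take j).map f).prod) (by simp)
  wlog hlt : i < j generalizing i j
  · exact this j i hij.symm heq.symm (lt_of_le_of_ne (not_lt.1 hlt) hij.symm)
  have hj : (i : ℕ) + (j - i) = j := by omega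
  refine ⟨l.take i, (l.drop i).take (j - i), l.drop j, ?_, ?_, ?_⟩
  · rw [← List.length_pos_iff, List.length_take, List.length_drop]
    omega
  · rw [← List.take_add, hj, List.take_append_drop]
  · rw [← List.prod_append, ← List.map_append, ← List.take_add, hj]
    exact heq.symm

end Monoid

theorem List.exists_eq_take_append_append_drop {α : Type*} (w : List α) {n : ℕ}
    (hn : 2 * n ≤ w.length) : ∃ x, w = w.take n ++ x ++ w.drop (w.length - n) := by
  refine ⟨(w.drop n).take (w.length - n - n), ?_⟩
  rw [← List.take_add, show n + (w.length - n - n) = w.length - n by omega,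
    List.take_append_drop]

namespace WithOne

instance {α : Type*} [Fintype α] : Fintype (WithOne α) := inferInstanceAs (Fintype (Option α))

theorem card_eq {α : Type*} [Fintype α] : Fintype.card (WithOne α) = Fintype.card α + 1 :=
  Fintype.card_option

variable {T : Type*} [Semigroup T]

theorem coe_mul_ne_one (t : T) (x : WithOne T) : (t : WithOne T) * x ≠ 1 := by
  induction x using WithOne.recOneCoe with
  | one => rw [mul_one]; exact coe_ne_one
  | coe y => rw [← coe_mul]; exact coe_ne_one

theorem pow_ne_one {u : WithOne T} (hu : u ≠ 1) {k : ℕ} (hk : 0 < k) : u ^ k ≠ 1 := by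
  obtain ⟨t, rfl⟩ := ne_one_iff_exists.mp hu
  obtain ⟨k, rfl⟩ := Nat.exists_eq_succ_of_ne_zero hk.ne'
  rw [pow_succ']
  exact coe_mul_ne_one _ _

theorem prod_map_coe_ne_one {l : List T} (hl : l ≠ []) :
    (l.map ((↑) : T → WithOne T)).prod ≠ 1 := by
  obtain ⟨t, l, rfl⟩ := List.exists_cons_of_ne_nil hl
  rw [List.map_cons, List.prod_cons]
  exact coe_mul_ne_one _ _

theorem exists_prod_map_coe_eq_mul_idempotent_mul [Fintype T] (l : List T)
    (hl : Fintype.card T < l.length) :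
    ∃ (α γ : WithOne T) (e : T), IsIdempotentElem e ∧
      (l.map ((↑) : T → WithOne T)).prod = α * e * γ := by
  obtain ⟨x, y, z, hy, rfl, hxy⟩ :=
    List.exists_eq_append_append_prod_mul_eq ((↑) : T → WithOne T) l (by rw [card_eq]; exact hl)
  obtain ⟨k, hk, hidem⟩ := exists_isIdempotentElem_pow (y.map ((↑) : T → WithOne T)).prod
  obtain ⟨e, he⟩ := ne_one_iff_exists.mp (pow_ne_one (prod_map_coe_ne_one hy) hk)
  refine ⟨(x.map (↑)).prod, (z.map (↑)).prod, e, coe_injective ?_, ?_⟩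
  · rw [coe_mul, he]
    exact hidem
  · rw [he, mul_pow_eq_self_of_mul_eq_self hxy, List.map_append, List.map_append,
      List.prod_append, List.prod_append, hxy]

end WithOne

def HasTrivialLocalMonoids (T : Type*) [Semigroup T] : Prop :=
  ∀ e x : T, e * e = e → e * x * e = e

namespace HasTrivialLocalMonoids

variable {T : Type*} [Semigroup T]

theorem mul_mul_eq (hT : HasTrivialLocalMonoids T) {e f : T} (he : IsIdempotentElem e)
    (hf : IsIdempotentElem f) (x : T) : e * x * f = e * f :=
  calc e * x * f = e * x * (f * e * f) := by rw [hT f e hf]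
    _ = e * (x * f * e) * e * f := by simp only [mul_assoc, he.eq]
    _ = e * f := by rw [hT e _ he]

theorem coe_mul_mul_coe (hT : HasTrivialLocalMonoids T) {e f : T} (he : IsIdempotentElem e)
    (hf : IsIdempotentElem f) (x : WithOne T) : (e : WithOne T) * x * f = e * f := by
  induction x using WithOne.recOneCoe with
  | one => rw [mul_one]
  | coe y => rw [← WithOne.coe_mul, ← WithOne.coe_mul, ← WithOne.coe_mul, hT.mul_mul_eq he hf]

theorem prod_map_coe_append_append [Fintype T] (hT : HasTrivialLocalMonoids T)
    {p x q : List T} (hp : Fintype.card T < p.length) (hq : Fintype.card T < q.length) :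
    ((p ++ x ++ q).map ((↑) : T → WithOne T)).prod =
      ((p ++ q).map ((↑) : T → WithOne T)).prod := by
  obtain ⟨α, γ, e, he, hp⟩ := WithOne.exists_prod_map_coe_eq_mul_idempotent_mul p hp
  obtain ⟨δ, ε, f, hf, hq⟩ := WithOne.exists_prod_map_coe_eq_mul_idempotent_mul q hq
  have hsandwich (y : WithOne T) : α * e * γ * y * (δ * f * ε) = α * (e * f) * ε := by
    rw [← hT.coe_mul_mul_coe he hf (γ * y * δ)]
    simp only [mul_assoc]
  simp only [List.map_append, List.prod_append, hp, hq]
  rw [hsandwich, ← hsandwich 1, mul_one]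

end HasTrivialLocalMonoids

section Words

variable {A T : Type*} [Semigroup T]

theorem wordProd_cons (a : A) (l : List A) :
    wordProd (a :: l) = ↑(⟨a, l⟩ : FreeSemigroup A) := by
  induction l generalizing a with
  | nil => rfl
  | cons b l ih =>
    rw [wordProd, List.map_cons, List.prod_cons, ← wordProd, ih, ← WithOne.coe_mul]
    rfl

theorem exists_wordProd_eq_coe {l : List A} (hl : l ≠ []) :
    ∃ v : FreeSemigroup A, wordProd l = ↑v ∧ v.length = l.length := by
  obtain ⟨a, l, rfl⟩ := List.exists_cons_of_ne_nil hl
  exact ⟨⟨a, l⟩, wordProd_cons a l, rfl⟩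

theorem WithOne.map_wordProd (φ : FreeSemigroup A →ₙ* T) (l : List A) :
    WithOne.map φ (wordProd l) =
      ((l.map (φ ∘ FreeSemigroup.of)).map ((↑) : T → WithOne T)).prod := by
  have hmap : WithOne.map φ = WithOne.mapMulHom φ := funext fun x => by
    induction x using WithOne.recOneCoe with
    | one => rfl
    | coe y => rfl
  rw [hmap, wordProd, map_list_prod, List.map_map, List.map_map]
  rfl

theorem HasTrivialLocalMonoids.map_wordProd_append_append [Fintype T]
    (hT : HasTrivialLocalMonoids T) (φ : FreeSemigroup A →ₙ* T) {p x q : List A}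
    (hp : Fintype.card T < p.length) (hq : Fintype.card T < q.length) :
    WithOne.map φ (wordProd (p ++ x ++ q)) = WithOne.map φ (wordProd (p ++ q)) := by
  set g := ⇑φ ∘ FreeSemigroup.of
  have := hT.prod_map_coe_append_append (x := x.map g) (p := p.map g) (q := q.map g)
    (by rwa [List.length_map]) (by rwa [List.length_map])
  simpa only [WithOne.map_wordProd, List.map_append] using this

end Words

/-- Let `S₁, …, S_m` be finite semigroups with trivial local monoids, let
`hᵢ : A⁺ → Sᵢ` be semigroup morphisms and `N = |S₁| + ⋯ + |S_m|`. Then for every word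
`w` of length `> 2N + 2`, the word `v` consisting of the first `N+1` and the last `N+1`
letters of `w` satisfies `hᵢ(v) = hᵢ(w)` for all `i`. In particular, every non-empty
intersection of languages recognized by `h₁, …, h_m` contains a word of length at most
`2N + 2`. -/
theorem stmt_8 {A : Type*} {m : ℕ} (S : Fin m → Type*) [∀ i, Semigroup (S i)]
    [∀ i, Fintype (S i)]
    (hLI : ∀ i, ∀ e x : S i, e * e = e → e * x * e = e)
    (h : ∀ i, FreeSemigroup A →ₙ* S i)
    (N : ℕ) (hN : N = ∑ i, Fintype.card (S i)) :
    (∀ w : List A, 2 * N + 2 < w.length → ∀ i,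
        WithOne.map (h i) (wordProd (w.take (N + 1) ++ w.drop (w.length - (N + 1)))) =
          WithOne.map (h i) (wordProd w)) ∧
      ∀ P : ∀ i, Set (S i),
        (∃ u : FreeSemigroup A, ∀ i, h i u ∈ P i) →
          ∃ v : FreeSemigroup A, v.length ≤ 2 * N + 2 ∧ ∀ i, h i v ∈ P i := by
  have hcard (i : Fin m) : Fintype.card (S i) < N + 1 := by
    rw [hN, Nat.lt_succ_iff]
    exact Finset.single_le_sum (f := fun j => Fintype.card (S j)) (by simp) (Finset.mem_univ i)
  have hmiddle (w : List A) (hw : 2 * N + 2 < w.length) (i : Fin m) :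
      WithOne.map (h i) (wordProd (w.take (N + 1) ++ w.drop (w.length - (N + 1)))) =
        WithOne.map (h i) (wordProd w) := by
    obtain ⟨x, hx⟩ := w.exists_eq_take_append_append_drop (n := N + 1) (by omega)
    conv_rhs => rw [hx]
    have := hcard i
    refine (HasTrivialLocalMonoids.map_wordProd_append_append (hLI i) (h i) ?_ ?_).symm
    · rw [List.length_take]; omega
    · rw [List.length_drop]; omega
  refine ⟨hmiddle, ?_⟩
  rintro P ⟨⟨a, l⟩, hu⟩
  by_cases hlen : (⟨a, l⟩ : FreeSemigroup A).length ≤ 2 * N + 2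
  · exact ⟨_, hlen, hu⟩
  obtain ⟨v, hv, hvlen⟩ := exists_wordProd_eq_coe
    (l := (a :: l).take (N + 1) ++ (a :: l).drop ((a :: l).length - (N + 1))) (by simp)
  refine ⟨v, ?_, fun i => ?_⟩
  · rw [hvlen, List.length_append, List.length_take, List.length_drop]
    omega
  · have := hmiddle (a :: l) (not_le.mp hlen) i
    rw [hv, wordProd_cons, WithOne.map_coe, WithOne.map_coe, WithOne.coe_inj] at this
    exact this ▸ hu i
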